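/- arXiv:2112.00543 — 3 statements merged into one kernel-verified Lean document; each statement's English description precedes it below -/
import Mathlib

section
/- Let U₀, Ũ₀, U₁, Ũ₁ be unitaries on ℂ² and |φ₀⟩, |φ₁⟩ unit vectors in ℂ². Define |ψ₊⟩ ∝ (U₀Ũ₀ ⊗ U₁Ũ₁ + Ũ₀U₀ ⊗ Ũ₁U₁)(|φ₀⟩⊗|φ₁⟩). If ⟨φ₀| (Ũ₀U₀)† (U₀Ũ₀) |φ₀⟩ = 0 and ⟨φ₁| (Ũ₁U₁)† (U₁Ũ₁) |φ₁⟩ = 0, then |ψ₊⟩ (suitably normalized) is maximally entangled: its reduced density matrix on either qubit is (1/2)·I. -/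
/-!
The two branches of the switch output are product states: up to the factor `1/√2`,
`ψ = a ⊗ c + b ⊗ d` with `a = U₀Ũ₀φ₀`, `b = Ũ₀U₀φ₀`, `c = U₁Ũ₁φ₁`, `d = Ũ₁U₁φ₁`. The unitaries keep
these vectors normalized and the hypotheses make `a ⊥ b` and `c ⊥ d`, so `{a, b}` and `{c, d}`
are orthonormal bases of `ℂ²`. Tracing out the second factor leaves `(a a† + b b†) / 2`, which is
`I / 2` by completeness of `{a, b}`; symmetrically for the first factor.
-/

open Matrix Complex

noncomputable section

def tens2 (a b : Fin 2 → ℂ) : Fin 2 × Fin 2 → ℂ := fun p => a p.1 * b p.2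

def inner2 (u v : Fin 2 → ℂ) : ℂ := ∑ i, star (u i) * v i

/-- Kronecker (tensor) product of two single-qubit operators. -/
def kron2 (A B : Matrix (Fin 2) (Fin 2) ℂ) : Matrix (Fin 2 × Fin 2) (Fin 2 × Fin 2) ℂ :=
  Matrix.of fun p q => A p.1 q.1 * B p.2 q.2

/-- Reduced density matrix on the first qubit. -/
def rho1 (ψ : Fin 2 × Fin 2 → ℂ) : Matrix (Fin 2) (Fin 2) ℂ :=
  Matrix.of fun i j => ∑ k, ψ (i, k) * star (ψ (j, k))

/-- Reduced density matrix on the second qubit. -/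
def rho2 (ψ : Fin 2 × Fin 2 → ℂ) : Matrix (Fin 2) (Fin 2) ℂ :=
  Matrix.of fun i j => ∑ k, ψ (k, i) * star (ψ (k, j))

lemma inner2_eq_star_dotProduct (u v : Fin 2 → ℂ) : inner2 u v = star u ⬝ᵥ v := rfl

lemma star_inner2 (u v : Fin 2 → ℂ) : star (inner2 u v) = inner2 v u := by
  rw [inner2_eq_star_dotProduct, inner2_eq_star_dotProduct, star_dotProduct v u]

lemma inner2_mulVec_mulVec {M : Matrix (Fin 2) (Fin 2) ℂ} (hM : M ∈ unitaryGroup (Fin 2) ℂ)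
    (u v : Fin 2 → ℂ) : inner2 (M *ᵥ u) (M *ᵥ v) = inner2 u v := by
  rw [inner2_eq_star_dotProduct, inner2_eq_star_dotProduct, star_mulVec, ← dotProduct_mulVec,
    mulVec_mulVec, ← star_eq_conjTranspose, mem_unitaryGroup_iff'.mp hM, one_mulVec]

lemma vecMulVec_add_vecMulVec_eq_one {a b : Fin 2 → ℂ} (ha : inner2 a a = 1)
    (hb : inner2 b b = 1) (hab : inner2 a b = 0) :
    vecMulVec a (star a) + vecMulVec b (star b) = 1 := by
  -- `M` has columns `a, b`, so `Mᴴ M = 1`; then `M Mᴴ = 1` is the completeness relation.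
  set M : Matrix (Fin 2) (Fin 2) ℂ := (Matrix.of ![a, b])ᵀ
  have hba : inner2 b a = 0 := by rw [← star_inner2, hab, star_zero]
  have hM : Mᴴ * M = 1 := by
    ext k l
    change inner2 (![a, b] k) (![a, b] l) = _
    fin_cases k <;> fin_cases l <;> simp [ha, hb, hab, hba]
  rw [← mul_eq_one_comm.mp hM]
  ext i j
  simp [M, mul_apply, Fin.sum_univ_two, vecMulVec_apply]

lemma kron2_mulVec_tens2 (A B : Matrix (Fin 2) (Fin 2) ℂ) (u v : Fin 2 → ℂ) :
    kron2 A B *ᵥ tens2 u v = tens2 (A *ᵥ u) (B *ᵥ v) := by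
  ext ⟨i, k⟩
  simp only [kron2, tens2, mulVec, dotProduct, of_apply, Fintype.sum_prod_type, Finset.sum_mul_sum]
  exact Finset.sum_congr rfl fun _ _ => Finset.sum_congr rfl fun _ _ => by ring

lemma rho1_smul (r : ℂ) (ψ : Fin 2 × Fin 2 → ℂ) : rho1 (r • ψ) = (r * star r) • rho1 ψ := by
  ext i j
  simp only [rho1, of_apply, Matrix.smul_apply, Pi.smul_apply, smul_eq_mul, star_mul',
    Finset.mul_sum]
  exact Finset.sum_congr rfl fun _ _ => by ring

lemma rho2_smul (r : ℂ) (ψ : Fin 2 × Fin 2 → ℂ) : rho2 (r • ψ) = (r * star r) • rho2 ψ := by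
  ext i j
  simp only [rho2, of_apply, Matrix.smul_apply, Pi.smul_apply, smul_eq_mul, star_mul',
    Finset.mul_sum]
  exact Finset.sum_congr rfl fun _ _ => by ring

lemma rho1_tens2_add_tens2 (a b : Fin 2 → ℂ) {c d : Fin 2 → ℂ} (hc : inner2 c c = 1)
    (hd : inner2 d d = 1) (hcd : inner2 c d = 0) :
    rho1 (tens2 a c + tens2 b d) = vecMulVec a (star a) + vecMulVec b (star b) := by
  have hdc : inner2 d c = 0 := by rw [← star_inner2, hcd, star_zero]
  ext i j
  simp only [inner2, Fin.sum_univ_two] at hc hd hcd hdc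
  simp only [rho1, tens2, of_apply, Matrix.add_apply, vecMulVec_apply, Pi.add_apply, Pi.star_apply,
    Fin.sum_univ_two, star_add, star_mul']
  linear_combination (a i * star (a j)) * hc + (b i * star (b j)) * hd
    + (a i * star (b j)) * hdc + (b i * star (a j)) * hcd

lemma rho2_eq_rho1_comp_swap (ψ : Fin 2 × Fin 2 → ℂ) : rho2 ψ = rho1 (ψ ∘ Prod.swap) := rfl

lemma tens2_comp_swap (a b : Fin 2 → ℂ) : tens2 a b ∘ Prod.swap = tens2 b a :=
  funext fun _ => mul_comm _ _

lemma rho2_tens2_add_tens2 {a b : Fin 2 → ℂ} (ha : inner2 a a = 1) (hb : inner2 b b = 1)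
    (hab : inner2 a b = 0) (c d : Fin 2 → ℂ) :
    rho2 (tens2 a c + tens2 b d) = vecMulVec c (star c) + vecMulVec d (star d) := by
  rw [rho2_eq_rho1_comp_swap, Pi.add_comp, tens2_comp_swap, tens2_comp_swap,
    rho1_tens2_add_tens2 c d ha hb hab]

lemma inner2_switch_branches {U Ut : Matrix (Fin 2) (Fin 2) ℂ} (hU : U ∈ unitaryGroup (Fin 2) ℂ)
    (hUt : Ut ∈ unitaryGroup (Fin 2) ℂ) {φ : Fin 2 → ℂ} (hφ : inner2 φ φ = 1)
    (h : inner2 ((Ut * U) *ᵥ φ) ((U * Ut) *ᵥ φ) = 0) :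
    inner2 ((U * Ut) *ᵥ φ) ((U * Ut) *ᵥ φ) = 1 ∧ inner2 ((Ut * U) *ᵥ φ) ((Ut * U) *ᵥ φ) = 1 ∧
      inner2 ((U * Ut) *ᵥ φ) ((Ut * U) *ᵥ φ) = 0 := by
  rw [inner2_mulVec_mulVec (mul_mem hU hUt), inner2_mulVec_mulVec (mul_mem hUt hU),
    ← star_inner2 ((Ut * U) *ᵥ φ), h, star_zero]
  exact ⟨hφ, hφ, rfl⟩

lemma inv_sqrt_two_mul_star_self :
    ((Real.sqrt 2 : ℝ) : ℂ)⁻¹ * star ((Real.sqrt 2 : ℝ) : ℂ)⁻¹ = 1 / 2 := by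
  rw [star_inv₀, Complex.star_def, Complex.conj_ofReal, ← mul_inv, ← Complex.ofReal_mul,
    Real.mul_self_sqrt zero_le_two]
  norm_num

/-- if `⟨φᵢ|(ŨᵢUᵢ)†(UᵢŨᵢ)|φᵢ⟩ = 0` for `i = 0,1`, then the normalized switch
output `|ψ₊⟩ ∝ (U₀Ũ₀ ⊗ U₁Ũ₁ + Ũ₀U₀ ⊗ Ũ₁U₁)(|φ₀⟩⊗|φ₁⟩)` is maximally entangled:
both single-qubit reduced density matrices equal `(1/2)·I`. -/
theorem switch_output_maximally_entangled
    (U₀ Ut₀ U₁ Ut₁ : Matrix (Fin 2) (Fin 2) ℂ)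
    (hU₀ : U₀ ∈ Matrix.unitaryGroup (Fin 2) ℂ) (hUt₀ : Ut₀ ∈ Matrix.unitaryGroup (Fin 2) ℂ)
    (hU₁ : U₁ ∈ Matrix.unitaryGroup (Fin 2) ℂ) (hUt₁ : Ut₁ ∈ Matrix.unitaryGroup (Fin 2) ℂ)
    (φ₀ φ₁ : Fin 2 → ℂ) (hφ₀ : inner2 φ₀ φ₀ = 1) (hφ₁ : inner2 φ₁ φ₁ = 1)
    (h0 : inner2 ((Ut₀ * U₀).mulVec φ₀) ((U₀ * Ut₀).mulVec φ₀) = 0)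
    (h1 : inner2 ((Ut₁ * U₁).mulVec φ₁) ((U₁ * Ut₁).mulVec φ₁) = 0) :
    let ψ := ((Real.sqrt 2 : ℝ) : ℂ)⁻¹ •
      ((kron2 (U₀ * Ut₀) (U₁ * Ut₁) + kron2 (Ut₀ * U₀) (Ut₁ * U₁)).mulVec (tens2 φ₀ φ₁))
    rho1 ψ = (1 / 2 : ℂ) • (1 : Matrix (Fin 2) (Fin 2) ℂ) ∧
    rho2 ψ = (1 / 2 : ℂ) • (1 : Matrix (Fin 2) (Fin 2) ℂ) := by
  intro ψ
  obtain ⟨ha, hb, hab⟩ := inner2_switch_branches hU₀ hUt₀ hφ₀ h0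
  obtain ⟨hc, hd, hcd⟩ := inner2_switch_branches hU₁ hUt₁ hφ₁ h1
  have hψ : ψ = ((Real.sqrt 2 : ℝ) : ℂ)⁻¹ • (tens2 ((U₀ * Ut₀) *ᵥ φ₀) ((U₁ * Ut₁) *ᵥ φ₁)
      + tens2 ((Ut₀ * U₀) *ᵥ φ₀) ((Ut₁ * U₁) *ᵥ φ₁)) := by
    simp only [ψ, add_mulVec, kron2_mulVec_tens2]
  rw [hψ, rho1_smul, rho2_smul, inv_sqrt_two_mul_star_self, rho1_tens2_add_tens2 _ _ hc hd hcd,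
    rho2_tens2_add_tens2 ha hb hab _ _, vecMulVec_add_vecMulVec_eq_one ha hb hab,
    vecMulVec_add_vecMulVec_eq_one hc hd hcd]
  exact ⟨rfl, rfl⟩
end
end

section
/- Let n ≥ 2, let Uᵢ, Ũᵢ (i = 0,…,n−1) be unitaries on ℂ² and |φᵢ⟩ unit vectors, and suppose ⟨φᵢ| (ŨᵢUᵢ)† (UᵢŨᵢ) |φᵢ⟩ = 0 for all i. Then the normalized state proportional to (⊗ᵢ UᵢŨᵢ + ⊗ᵢ ŨᵢUᵢ)(⊗ᵢ |φᵢ⟩) equals (⊗ᵢ Wᵢ)·(1/√2)(|0⟩^{⊗n} + |1⟩^{⊗n}) for some local unitaries Wᵢ on ℂ²; i.e., it is local-unitarily equivalent to the n-qubit GHZ state. -/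
/-!
Write `aᵢ = UᵢŨᵢ|φᵢ⟩` and `bᵢ = ŨᵢUᵢ|φᵢ⟩`. Both are unit vectors and orthogonal by hypothesis,
so the matrix `Wᵢ` with columns `aᵢ, bᵢ` is unitary and sends `|0⟩ ↦ aᵢ`, `|1⟩ ↦ bᵢ`. Since a
tensor product of operators acts factorwise on product vectors, `⊗ᵢ Wᵢ` sends `|0…0⟩ + |1…1⟩` to
`⊗ᵢ aᵢ + ⊗ᵢ bᵢ`, which is the (unnormalized) switch output.
-/

open Matrix Complex

noncomputable section

/-- Tensor product of a family of `n` single-qubit vectors, as a vector on `(ℂ²)^⊗n`. -/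
def tensN (n : ℕ) (a : Fin n → (Fin 2 → ℂ)) : (Fin n → Fin 2) → ℂ :=
  fun f => ∏ i, a i (f i)

/-- Tensor product of a family of `n` single-qubit operators. -/
def tensOp (n : ℕ) (M : Fin n → Matrix (Fin 2) (Fin 2) ℂ) :
    Matrix (Fin n → Fin 2) (Fin n → Fin 2) ℂ :=
  Matrix.of fun f g => ∏ i, M i (f i) (g i)

/-- The `n`-qubit GHZ state `(|0…0⟩+|1…1⟩)/√2`. -/
def ghzN (n : ℕ) : (Fin n → Fin 2) → ℂ := fun f =>
  ((Real.sqrt 2 : ℝ) : ℂ)⁻¹ *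
    ((if f = fun _ => 0 then 1 else 0) + (if f = fun _ => 1 then 1 else 0))

lemma inner2_eq_star_inner2 (u v : Fin 2 → ℂ) : inner2 u v = star (inner2 v u) := by
  rw [inner2_eq_star_dotProduct, inner2_eq_star_dotProduct, star_dotProduct]

lemma inner2_mulVec_of_mem_unitaryGroup {M : Matrix (Fin 2) (Fin 2) ℂ}
    (hM : M ∈ unitaryGroup (Fin 2) ℂ) (x y : Fin 2 → ℂ) :
    inner2 (M *ᵥ x) (M *ᵥ y) = inner2 x y := by
  rw [inner2_eq_star_dotProduct, star_mulVec, dotProduct_mulVec, vecMul_vecMul,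
    ← star_eq_conjTranspose, mem_unitaryGroup_iff'.mp hM, vecMul_one, inner2_eq_star_dotProduct]

def ofCols (a b : Fin 2 → ℂ) : Matrix (Fin 2) (Fin 2) ℂ := (Matrix.of ![a, b])ᵀ

lemma ofCols_mem_unitaryGroup {a b : Fin 2 → ℂ} (ha : inner2 a a = 1) (hb : inner2 b b = 1)
    (hba : inner2 b a = 0) : ofCols a b ∈ unitaryGroup (Fin 2) ℂ := by
  have hab : inner2 a b = 0 := by rw [inner2_eq_star_inner2, hba, star_zero]
  rw [mem_unitaryGroup_iff']
  ext j k
  have hgram : (star (ofCols a b) * ofCols a b) j k = inner2 (![a, b] j) (![a, b] k) := by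
    simp [ofCols, inner2, mul_apply]
  rw [hgram]
  fin_cases j <;> fin_cases k <;> simp [ha, hb, hab, hba]

lemma tensOp_mulVec_tensN (n : ℕ) (M : Fin n → Matrix (Fin 2) (Fin 2) ℂ)
    (a : Fin n → Fin 2 → ℂ) :
    tensOp n M *ᵥ tensN n a = tensN n fun i => M i *ᵥ a i := by
  funext f
  simp only [tensOp, tensN, mulVec, dotProduct, of_apply, Fintype.prod_sum,
    Finset.prod_mul_distrib]

lemma tensOp_col (n : ℕ) (M : Fin n → Matrix (Fin 2) (Fin 2) ℂ) (g : Fin n → Fin 2) :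
    (tensOp n M).col g = tensN n fun i => (M i).col (g i) := rfl

lemma ghzN_eq_smul_add_single (n : ℕ) :
    ghzN n = ((Real.sqrt 2 : ℝ) : ℂ)⁻¹ •
      (Pi.single (fun _ => 0) 1 + Pi.single (fun _ => 1) 1) := by
  funext f
  simp [ghzN, Pi.single_apply]

lemma tensOp_mulVec_ghzN (n : ℕ) (a b : Fin n → Fin 2 → ℂ) :
    tensOp n (fun i => ofCols (a i) (b i)) *ᵥ ghzN n =
      ((Real.sqrt 2 : ℝ) : ℂ)⁻¹ • (tensN n a + tensN n b) := by
  rw [ghzN_eq_smul_add_single, mulVec_smul, mulVec_add, mulVec_single_one, mulVec_single_one,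
    tensOp_col, tensOp_col]
  rfl

theorem switch_output_LU_equivalent_GHZ_general
    (n : ℕ)
    (U Ut : Fin n → Matrix (Fin 2) (Fin 2) ℂ)
    (hU : ∀ i, U i ∈ Matrix.unitaryGroup (Fin 2) ℂ)
    (hUt : ∀ i, Ut i ∈ Matrix.unitaryGroup (Fin 2) ℂ)
    (φ : Fin n → (Fin 2 → ℂ)) (hφ : ∀ i, inner2 (φ i) (φ i) = 1)
    (horth : ∀ i, inner2 ((Ut i * U i).mulVec (φ i)) ((U i * Ut i).mulVec (φ i)) = 0) :
    ∃ W : Fin n → Matrix (Fin 2) (Fin 2) ℂ,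
      (∀ i, W i ∈ Matrix.unitaryGroup (Fin 2) ℂ) ∧
      ((Real.sqrt 2 : ℝ) : ℂ)⁻¹ •
        ((tensOp n (fun i => U i * Ut i) + tensOp n (fun i => Ut i * U i)).mulVec
          (tensN n φ)) =
        (tensOp n W).mulVec (ghzN n) := by
  set a : Fin n → Fin 2 → ℂ := fun i => (U i * Ut i) *ᵥ φ i
  set b : Fin n → Fin 2 → ℂ := fun i => (Ut i * U i) *ᵥ φ i
  have ha : ∀ i, inner2 (a i) (a i) = 1 := fun i =>
    (inner2_mulVec_of_mem_unitaryGroup (mul_mem (hU i) (hUt i)) _ _).trans (hφ i)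
  have hb : ∀ i, inner2 (b i) (b i) = 1 := fun i =>
    (inner2_mulVec_of_mem_unitaryGroup (mul_mem (hUt i) (hU i)) _ _).trans (hφ i)
  refine ⟨fun i => ofCols (a i) (b i),
    fun i => ofCols_mem_unitaryGroup (ha i) (hb i) (horth i), ?_⟩
  rw [tensOp_mulVec_ghzN, add_mulVec, tensOp_mulVec_tensN, tensOp_mulVec_tensN]

/-- under the orthogonality conditions, the normalized switch output
`∝ (⊗ᵢ UᵢŨᵢ + ⊗ᵢ ŨᵢUᵢ)(⊗ᵢ|φᵢ⟩)` is local-unitarily equivalent to the `n`-qubit GHZ state. -/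
theorem switch_output_LU_equivalent_GHZ
    (n : ℕ) (hn : 2 ≤ n)
    (U Ut : Fin n → Matrix (Fin 2) (Fin 2) ℂ)
    (hU : ∀ i, U i ∈ Matrix.unitaryGroup (Fin 2) ℂ)
    (hUt : ∀ i, Ut i ∈ Matrix.unitaryGroup (Fin 2) ℂ)
    (φ : Fin n → (Fin 2 → ℂ)) (hφ : ∀ i, inner2 (φ i) (φ i) = 1)
    (horth : ∀ i, inner2 ((Ut i * U i).mulVec (φ i)) ((U i * Ut i).mulVec (φ i)) = 0) :
    ∃ W : Fin n → Matrix (Fin 2) (Fin 2) ℂ,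
      (∀ i, W i ∈ Matrix.unitaryGroup (Fin 2) ℂ) ∧
      ((Real.sqrt 2 : ℝ) : ℂ)⁻¹ •
        ((tensOp n (fun i => U i * Ut i) + tensOp n (fun i => Ut i * U i)).mulVec
          (tensN n φ)) =
        (tensOp n W).mulVec (ghzN n) :=
  switch_output_LU_equivalent_GHZ_general n U Ut hU hUt φ hφ horth
end
end

section
/- Conversely: let aᵢ, bᵢ (i = 0,…,n−1) be unit vectors in ℂ² and suppose v = ⊗ᵢaᵢ + ⊗ᵢbᵢ is nonzero and bi-separable across some bipartition of the n qubits into two nonempty sets A and B. Then there exists an index i and a scalar c ∈ ℂ with bᵢ = c·aᵢ (i.e., some pair aᵢ, bᵢ is linearly dependent). -/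
/-!
Split `v = ⊗ᵢaᵢ + ⊗ᵢbᵢ` across the cut as the matrix `M s t = α s * α' t + β s * β' t`,
where `α, β` are the products of the `a`- and `b`-factors over `A` and `α', β'` those over
its complement. Bi-separability makes `M` rank one, so its `2 × 2` minors vanish; such a minor
factors as `(α s β s' - β s α s') (α' t β' t' - β' t α' t')`, hence on one side of the cut the
product tensors of the `a`'s and of the `b`'s are proportional. If all factors are nonzero
(the `aᵢ` are unit vectors, and `bᵢ = 0` is dependent on `aᵢ` anyway), slicing two
proportional product tensors along one coordinate, at a point where the other factors do not
vanish, shows that the factors at that coordinate are proportional.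
-/

open Matrix Complex

noncomputable section

section ProductTensors

variable {K : Type*} [Field K]

theorem exists_eq_smul_of_mul_eq_mul {α : Type*} {u v : α → K} {s₀ : α} (hs₀ : u s₀ ≠ 0)
    (h : ∀ s s', u s * v s' = v s * u s') : ∃ c : K, v = c • u :=
  ⟨v s₀ / u s₀, funext fun s => by
    rw [Pi.smul_apply, smul_eq_mul, div_mul_eq_mul_div, eq_div_iff hs₀]
    linear_combination h s₀ s⟩

theorem cross_eq_or_cross_eq_of_add_mul_eq_mul {α β : Type*} {u₁ u₂ x : α → K}
    {w₁ w₂ y : β → K} (h : ∀ s t, u₁ s * w₁ t + u₂ s * w₂ t = x s * y t) :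
    (∀ s s', u₁ s * u₂ s' = u₂ s * u₁ s') ∨ ∀ t t', w₁ t * w₂ t' = w₂ t * w₁ t' := by
  by_contra! ⟨⟨s, s', hs⟩, t, t', ht⟩
  have hminor : (u₁ s * u₂ s' - u₂ s * u₁ s') * (w₁ t * w₂ t' - w₂ t * w₁ t') = 0 := by
    linear_combination (u₁ s' * w₁ t' + u₂ s' * w₂ t') * h s t + x s * y t * h s' t'
      - (u₁ s' * w₁ t + u₂ s' * w₂ t) * h s t' - x s * y t' * h s' t
  exact mul_ne_zero (sub_ne_zero.mpr hs) (sub_ne_zero.mpr ht) hminor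

variable {ι κ : Type*} [Fintype ι]

theorem prod_piEquivPiSubtypeProd_symm_apply (p : ι → Prop) [DecidablePred p] (a : ι → κ → K)
    (s : {i // p i} → κ) (t : {i // ¬p i} → κ) :
    ∏ i, a i ((Equiv.piEquivPiSubtypeProd p fun _ => κ).symm (s, t) i) =
      (∏ i : {i // p i}, a i (s i)) * ∏ i : {i // ¬p i}, a i (t i) := by
  rw [← Fintype.prod_subtype_mul_prod_subtype p]
  congr 1 <;> refine Finset.prod_congr rfl fun i _ => ?_ <;> simp [i.2]

theorem prod_subtype_mul_add_prod_subtype_mul_eq {p : ι → Prop} [DecidablePred p]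
    {a b : ι → κ → K} {x : ({i // p i} → κ) → K} {y : ({i // ¬p i} → κ) → K}
    (h : ∀ f : ι → κ, ∏ i, a i (f i) + ∏ i, b i (f i) = x (fun j => f j) * y (fun j => f j))
    (s : {i // p i} → κ) (t : {i // ¬p i} → κ) :
    (∏ i : {i // p i}, a i (s i)) * (∏ i : {i // ¬p i}, a i (t i)) +
      (∏ i : {i // p i}, b i (s i)) * (∏ i : {i // ¬p i}, b i (t i)) = x s * y t := by
  set e := Equiv.piEquivPiSubtypeProd p fun _ => κ
  have hst := e.apply_symm_apply (s, t)
  have hs : (fun j : {i // p i} => e.symm (s, t) j) = s := congrArg Prod.fst hst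
  have ht : (fun j : {i // ¬p i} => e.symm (s, t) j) = t := congrArg Prod.snd hst
  have := h (e.symm (s, t))
  rwa [prod_piEquivPiSubtypeProd_symm_apply, prod_piEquivPiSubtypeProd_symm_apply, hs, ht] at this

variable [DecidableEq ι]

theorem prod_apply_update_eq_mul (a : ι → κ → K) (s : ι → κ) (i₀ : ι) (k : κ) :
    ∏ i, a i (Function.update s i₀ k i) = a i₀ k * ∏ i ∈ {i₀}ᶜ, a i (s i) := by
  rw [Fintype.prod_eq_mul_prod_compl i₀, Function.update_self]
  congr 1
  refine Finset.prod_congr rfl fun i hi => ?_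
  rw [Function.update_of_ne (by simpa using hi)]

theorem exists_eq_smul_of_prod_eq_mul_prod {a b : ι → κ → K} (hb : ∀ i, b i ≠ 0) {c : K}
    (h : ∀ s : ι → κ, ∏ i, b i (s i) = c * ∏ i, a i (s i)) (i₀ : ι) :
    ∃ c' : K, b i₀ = c' • a i₀ := by
  choose t ht using fun i => Function.ne_iff.mp (hb i)
  have hbt : ∏ i ∈ {i₀}ᶜ, b i (t i) ≠ 0 := Finset.prod_ne_zero_iff.mpr fun i _ => ht i
  refine ⟨c * (∏ i ∈ {i₀}ᶜ, a i (t i)) / ∏ i ∈ {i₀}ᶜ, b i (t i), funext fun k => ?_⟩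
  have hk := h (Function.update t i₀ k)
  rw [prod_apply_update_eq_mul, prod_apply_update_eq_mul] at hk
  rw [Pi.smul_apply, smul_eq_mul, div_mul_eq_mul_div, eq_div_iff hbt]
  linear_combination hk

theorem exists_eq_smul_of_prod_mul_prod_eq {a b : ι → κ → K} (ha : ∀ i, a i ≠ 0)
    (hb : ∀ i, b i ≠ 0)
    (h : ∀ s s' : ι → κ, (∏ i, a i (s i)) * ∏ i, b i (s' i) = (∏ i, b i (s i)) * ∏ i, a i (s' i))
    (i₀ : ι) : ∃ c : K, b i₀ = c • a i₀ := by
  choose t ht using fun i => Function.ne_iff.mp (ha i)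
  obtain ⟨c, hc⟩ := exists_eq_smul_of_mul_eq_mul
    (u := fun s : ι → κ => ∏ i, a i (s i)) (Finset.prod_ne_zero_iff.mpr fun i _ => ht i) h
  exact exists_eq_smul_of_prod_eq_mul_prod hb (fun s => congr_fun hc s) i₀

end ProductTensors

theorem ne_zero_of_inner2_self_eq_one {u : Fin 2 → ℂ} (hu : inner2 u u = 1) : u ≠ 0 := by
  rintro rfl
  simp [inner2] at hu

theorem biseparable_necessity_general
    (n : ℕ)
    (a b : Fin n → (Fin 2 → ℂ))
    (ha : ∀ i, inner2 (a i) (a i) = 1)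
    (A : Set (Fin n)) (hA : A.Nonempty) (hAc : Aᶜ.Nonempty)
    (hsep : ∃ (x : ({j : Fin n // j ∈ A} → Fin 2) → ℂ)
              (y : ({j : Fin n // j ∉ A} → Fin 2) → ℂ),
        ∀ f : Fin n → Fin 2,
          (tensN n a + tensN n b) f = x (fun j => f j.1) * y (fun j => f j.1)) :
    ∃ (i : Fin n) (c : ℂ), b i = c • a i := by
  classical
  by_contra! hdep
  have ha₀ : ∀ i, a i ≠ 0 := fun i => ne_zero_of_inner2_self_eq_one (ha i)
  have hb₀ : ∀ i, b i ≠ 0 := fun i hbi => hdep i 0 (by rw [hbi, zero_smul])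
  obtain ⟨x, y, hxy⟩ := hsep
  have hsplit := prod_subtype_mul_add_prod_subtype_mul_eq (p := (· ∈ A)) (a := a) (b := b) hxy
  rcases cross_eq_or_cross_eq_of_add_mul_eq_mul hsplit with hcross | hcross
  · obtain ⟨i, hi⟩ := hA
    obtain ⟨c, hc⟩ := exists_eq_smul_of_prod_mul_prod_eq (fun j : {j // j ∈ A} => ha₀ j)
      (fun j => hb₀ j) hcross ⟨i, hi⟩
    exact hdep i c hc
  · obtain ⟨i, hi⟩ := hAc
    obtain ⟨c, hc⟩ := exists_eq_smul_of_prod_mul_prod_eq (fun j : {j // j ∉ A} => ha₀ j)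
      (fun j => hb₀ j) hcross ⟨i, hi⟩
    exact hdep i c hc

/-- if the nonzero vector `v = ⊗ᵢaᵢ + ⊗ᵢbᵢ` is bi-separable across some
nontrivial bipartition `(A, Aᶜ)` of the `n` qubits, then some pair `aᵢ, bᵢ` is linearly
dependent: `bᵢ = c·aᵢ` for some scalar `c`. -/
theorem biseparable_necessity
    (n : ℕ) (hn : 2 ≤ n)
    (a b : Fin n → (Fin 2 → ℂ))
    (ha : ∀ i, inner2 (a i) (a i) = 1) (hb : ∀ i, inner2 (b i) (b i) = 1)
    (hnz : tensN n a + tensN n b ≠ 0)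
    (A : Set (Fin n)) (hA : A.Nonempty) (hAc : Aᶜ.Nonempty)
    (hsep : ∃ (x : ({j : Fin n // j ∈ A} → Fin 2) → ℂ)
              (y : ({j : Fin n // j ∉ A} → Fin 2) → ℂ),
        ∀ f : Fin n → Fin 2,
          (tensN n a + tensN n b) f = x (fun j => f j.1) * y (fun j => f j.1)) :
    ∃ (i : Fin n) (c : ℂ), b i = c • a i :=
  biseparable_necessity_general n a b ha A hA hAc hsep
end
end
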